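/- arXiv:2412.06223 — 3 statements merged into one kernel-verified Lean document; each statement's English description precedes it below -/
import Mathlib

section
/- Let q ≥ 2 and let t, w, e be positive integers with e ≤ w − 1 and 2·binom(w, w−e) ≥ binom(w−t−1, w−e) + binom(w+t, w−e), and let n ≥ t. Then every q-ary (n, t, w, e)-LPECC code of size b satisfies, as an inequality of rational numbers, b ≤ [ (q−1)^{w−e}·binom(n, w−e) + binom(w+t, w−e) · Σ_{k=0}^{w−e−1} (q−1)^{k}·binom(n, k)/binom(k+e, k) ] / binom(w+t, w−e). -/
open Finset

/-- The support of a `q`-ary word `x : Fin n → Fin q`. -/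
def qsupp {n q : ℕ} (x : Fin n → Fin q) : Finset (Fin n) :=
  Finset.univ.filter fun i => (x i : ℕ) ≠ 0

/-- The (Hamming) weight of a `q`-ary word. -/
def qwt {n q : ℕ} (x : Fin n → Fin q) : ℕ := (qsupp x).card

/-- A `q`-ary `(n,t,w,e)`-LPECC code of size `b`: pairwise disjoint nonempty
codesets `P i ⊆ Q^n` satisfying Properties A_q(t), B_q(w), C_q(e). -/
def IsQaryLPECC (q n t w e : ℕ) {b : ℕ}
    (P : Fin b → Finset (Fin n → Fin q)) : Prop :=
  (∀ i, (P i).Nonempty) ∧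
  (∀ i j : Fin b, i ≠ j → Disjoint (P i) (P j)) ∧
  (∀ T : Finset (Fin n), T.card = t → ∀ i, ∃ x ∈ P i, Disjoint (qsupp x) T) ∧
  (∀ i, ∀ x ∈ P i, qwt x ≤ w) ∧
  (∀ i j : Fin b, i ≠ j → ∀ x ∈ P i, ∀ y ∈ P j, 2 * e + 1 ≤ hammingDist x y)

/-!
Double counting with weights. Put `k = w - e` and give a word of weight `j ≤ k` the weight `1`
if `j = k` and `C(w + t, k) / C(j + e, j)` otherwise. Each class `P i` covers a set `E i` of words
of weight at most `k` lying within distance `e` of it, of total weight at least `C(w + t, k)`;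
by Property C these sets are disjoint, and counting the words of each weight gives the bound.

If the class has a codeword of weight `u < w`, `E i` consists of its subwords of weight `u - e`.
Otherwise all its codewords have weight `w` and `E i` is its `k`-shadow, the weight-`k` words
agreeing with some codeword on their support. For `k = 1` Property A alone forces `w + t` letters.
For `k ≥ 2` the binomial hypothesis gives `t k ≤ w - k + 1`, so `w ≥ 2t + 1`. Then either two
codewords agree in fewer than `w - t` nonzero entries, and together they already have at least
`2 C(w, k) - C(w - t - 1, k) ≥ C(w + t, k)` subwords of weight `k`, or the codewords avoiding the
`t`-subsets of the support of one codeword `x₀` all extend `x₀` to one word `c` of weight `w + t`,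
each of whose subwords of weight `k` is then a subword of one of them.
-/

theorem Nat.choose_succ_add_mul_choose_le (w t j : ℕ) :
    w.choose (j + 1) + t * w.choose j ≤ (w + t).choose (j + 1) := by
  induction t with
  | zero => simp
  | succ t ih =>
    have hmono : w.choose j ≤ (w + t).choose j := Nat.choose_le_choose j (Nat.le_add_right w t)
    rw [← add_assoc, Nat.choose_succ_succ']
    nlinarith

theorem Nat.mul_le_of_choose_add_le_two_mul {w t k : ℕ} (hk : 0 < k) (hkw : k ≤ w)
    (h : (w + t).choose k ≤ 2 * w.choose k) : t * k ≤ w + 1 - k := by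
  obtain ⟨j, rfl⟩ := Nat.exists_eq_add_of_lt hk
  have hpos : 0 < w.choose j := Nat.choose_pos (by omega)
  have hstep : t * w.choose j ≤ w.choose (j + 1) := by
    have := Nat.choose_succ_add_mul_choose_le w t j
    simp only [zero_add] at h ⊢
    omega
  have key : t * (j + 1) * w.choose j ≤ (w - j) * w.choose j := by
    calc t * (j + 1) * w.choose j = t * w.choose j * (j + 1) := by ring
      _ ≤ w.choose (j + 1) * (j + 1) := Nat.mul_le_mul_right _ hstep
      _ = (w - j) * w.choose j := by rw [Nat.choose_succ_right_eq, mul_comm]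
  have := Nat.le_of_mul_le_mul_right key hpos
  simp only [zero_add]
  omega

theorem Finset.apply_insert_erase_eq_of_disjoint_apply_eq {α β : Type*} [DecidableEq α]
    {X : Finset α} {t : ℕ} {f : Finset α → β} (hX : 2 * t + 1 ≤ #X)
    (hf : ∀ T ⊆ X, ∀ T' ⊆ X, #T = t → #T' = t → Disjoint T T' → f T = f T')
    {T : Finset α} (hT : T ⊆ X) (hTt : #T = t) {a b : α} (ha : a ∈ T) (hb : b ∈ X)
    (hbT : b ∉ T) : f (insert b (T.erase a)) = f T := by
  have hbTX : insert b T ⊆ X := insert_subset hb hT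
  obtain ⟨S, hS, hSt⟩ := exists_subset_card_eq (s := X \ insert b T) (n := t)
    (by rw [card_sdiff_of_subset hbTX, card_insert_of_notMem hbT]; omega)
  have hSX : S ⊆ X := hS.trans sdiff_subset
  have hdisj : Disjoint (insert b T) S := disjoint_of_subset_right hS disjoint_sdiff
  have hT₁ : insert b (T.erase a) ⊆ insert b T := insert_subset_insert b (erase_subset a T)
  have hT₁t : #(insert b (T.erase a)) = t := by
    rw [card_insert_of_notMem (fun h => hbT (mem_of_mem_erase h)), card_erase_add_one ha, hTt]
  rw [hf _ (hT₁.trans hbTX) S hSX hT₁t hSt (disjoint_of_subset_left hT₁ hdisj),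
    hf T hT S hSX hTt hSt (disjoint_of_subset_left (subset_insert b T) hdisj)]

/-- Connectivity of the Kneser graph on the `t`-subsets of `X`, via one-element exchanges. -/
theorem Finset.apply_eq_of_disjoint_apply_eq {α β : Type*} [DecidableEq α] {X : Finset α}
    {t : ℕ} {f : Finset α → β} (hX : 2 * t + 1 ≤ #X)
    (hf : ∀ T ⊆ X, ∀ T' ⊆ X, #T = t → #T' = t → Disjoint T T' → f T = f T')
    {T T' : Finset α} (hT : T ⊆ X) (hT' : T' ⊆ X) (hTt : #T = t) (hT't : #T' = t) :
    f T = f T' := by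
  induction h : #(T \ T') generalizing T with
  | zero =>
    have hsub : T ⊆ T' := sdiff_eq_empty_iff_subset.1 (card_eq_zero.1 h)
    rw [eq_of_subset_of_card_le hsub (by omega)]
  | succ m ih =>
    obtain ⟨a, ha⟩ : (T \ T').Nonempty := card_pos.1 (by omega)
    obtain ⟨b, hb⟩ : (T' \ T).Nonempty := by
      rw [← card_pos, ← card_sdiff_comm (hTt.trans hT't.symm)]
      omega
    rw [mem_sdiff] at ha hb
    rw [← apply_insert_erase_eq_of_disjoint_apply_eq hX hf hT hTt ha.1 (hT' hb.1) hb.2]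
    refine ih (insert_subset (hT' hb.1) ((erase_subset a T).trans hT)) ?_ ?_
    · rw [card_insert_of_notMem (fun h => hb.2 (mem_of_mem_erase h)), card_erase_add_one ha.1, hTt]
    · have hdiff : insert b (T.erase a) \ T' = (T \ T').erase a := by
        ext i
        simp only [mem_sdiff, mem_insert, mem_erase]
        constructor
        · rintro ⟨rfl | ⟨hia, hiT⟩, hiT'⟩
          · exact absurd hb.1 hiT'
          · exact ⟨hia, hiT, hiT'⟩
        · rintro ⟨hia, hiT, hiT'⟩
          exact ⟨Or.inr ⟨hia, hiT⟩, hiT'⟩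
      rw [hdiff, card_erase_of_mem (mem_sdiff.2 ha), h]
      rfl

theorem disjoint_of_le_hammingDist {ι : Type*} [Fintype ι] {β : ι → Type*}
    [∀ i, DecidableEq (β i)] {e : ℕ} {A B E F : Finset (∀ i, β i)}
    (hAB : ∀ x ∈ A, ∀ y ∈ B, 2 * e + 1 ≤ hammingDist x y)
    (hE : ∀ z ∈ E, ∃ x ∈ A, hammingDist x z ≤ e) (hF : ∀ z ∈ F, ∃ y ∈ B, hammingDist y z ≤ e) :
    Disjoint E F := by
  refine Finset.disjoint_left.2 fun z hzE hzF => ?_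
  obtain ⟨x, hx, hxz⟩ := hE z hzE
  obtain ⟨y, hy, hyz⟩ := hF z hzF
  have := hammingDist_triangle x z y
  rw [hammingDist_comm z y] at this
  linarith [hAB x hx y hy]

namespace LPECC

variable {n q : ℕ} [NeZero q]

theorem mem_qsupp {x : Fin n → Fin q} {i : Fin n} : i ∈ qsupp x ↔ x i ≠ 0 := by
  simp only [qsupp, mem_filter, mem_univ, true_and, ne_eq, Fin.val_eq_zero_iff]

theorem notMem_qsupp {x : Fin n → Fin q} {i : Fin n} : i ∉ qsupp x ↔ x i = 0 := by
  rw [mem_qsupp, not_not]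

theorem card_filter_qsupp_eq_le (S : Finset (Fin n)) :
    #{z : Fin n → Fin q | qsupp z = S} ≤ (q - 1) ^ #S := by
  let letters : Fin n → Finset (Fin q) := fun i => if i ∈ S then univ.erase 0 else {0}
  have hsub : ({z : Fin n → Fin q | qsupp z = S} : Finset _) ⊆ Fintype.piFinset letters := by
    intro z hz
    obtain ⟨-, rfl⟩ := mem_filter.1 hz
    refine Fintype.mem_piFinset.2 fun i => ?_
    by_cases hi : i ∈ qsupp z
    · simpa [letters, hi] using mem_qsupp.1 hi
    · simp [letters, hi, notMem_qsupp.1 hi]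
  calc #{z : Fin n → Fin q | qsupp z = S} ≤ #(Fintype.piFinset letters) := card_le_card hsub
    _ = ∏ i, if i ∈ S then q - 1 else 1 := by
      rw [Fintype.card_piFinset]
      refine prod_congr rfl fun i _ => ?_
      split_ifs <;> simp [letters, *, card_erase_of_mem]
    _ = (q - 1) ^ #S := by rw [prod_ite_mem, univ_inter, prod_const]

theorem card_filter_qwt_eq_le (j : ℕ) :
    #{z : Fin n → Fin q | qwt z = j} ≤ n.choose j * (q - 1) ^ j := by
  have hsub : ({z : Fin n → Fin q | qwt z = j} : Finset _) ⊆
      (powersetCard j univ).biUnion fun S => {z | qsupp z = S} := by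
    intro z hz
    simp only [mem_filter, mem_univ, true_and] at hz
    simp only [mem_biUnion, mem_powersetCard, mem_filter, mem_univ, true_and]
    exact ⟨qsupp z, ⟨subset_univ _, hz⟩, rfl⟩
  calc #{z : Fin n → Fin q | qwt z = j}
      ≤ #((powersetCard j univ).biUnion fun S => {z : Fin n → Fin q | qsupp z = S}) :=
        card_le_card hsub
    _ ≤ #(powersetCard j (univ : Finset (Fin n))) * (q - 1) ^ j := by
      refine card_biUnion_le_card_mul _ _ _ fun S hS => ?_
      rw [← (mem_powersetCard.1 hS).2]
      exact card_filter_qsupp_eq_le S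
    _ = n.choose j * (q - 1) ^ j := by rw [card_powersetCard, card_univ, Fintype.card_fin]

def IsSubword (z x : Fin n → Fin q) : Prop := ∀ i, z i ≠ 0 → z i = x i

instance (z x : Fin n → Fin q) : Decidable (IsSubword z x) :=
  inferInstanceAs (Decidable (∀ i, z i ≠ 0 → z i = x i))

def subwords (x : Fin n → Fin q) (j : ℕ) : Finset (Fin n → Fin q) :=
  {z | IsSubword z x ∧ qwt z = j}

def codeShadow (C : Finset (Fin n → Fin q)) (j : ℕ) : Finset (Fin n → Fin q) :=
  C.biUnion (subwords · j)

def agreement (x y : Fin n → Fin q) : Finset (Fin n) := {i | x i = y i ∧ x i ≠ 0}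

def IsAvoiding (t : ℕ) (C : Finset (Fin n → Fin q)) : Prop :=
  ∀ T : Finset (Fin n), #T = t → ∃ x ∈ C, Disjoint (qsupp x) T

section Subwords

variable {x y z z' : Fin n → Fin q} {S : Finset (Fin n)} {j : ℕ}

theorem mem_agreement {i : Fin n} : i ∈ agreement x y ↔ x i = y i ∧ x i ≠ 0 := by
  simp [agreement]

theorem mem_subwords : z ∈ subwords x j ↔ IsSubword z x ∧ qwt z = j := by
  simp [subwords]

theorem mem_codeShadow {C : Finset (Fin n → Fin q)} :
    z ∈ codeShadow C j ↔ ∃ x ∈ C, IsSubword z x ∧ qwt z = j := by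
  simp [codeShadow, mem_subwords]

theorem subwords_subset_codeShadow {C : Finset (Fin n → Fin q)} (hx : x ∈ C) :
    subwords x j ⊆ codeShadow C j :=
  subset_biUnion_of_mem (subwords · j) hx

theorem IsSubword.qsupp_subset (h : IsSubword z x) : qsupp z ⊆ qsupp x := by
  intro i hi
  rw [mem_qsupp] at hi ⊢
  rwa [← h i hi]

theorem IsSubword.eq_of_qsupp_eq (hz : IsSubword z x) (hz' : IsSubword z' x)
    (h : qsupp z = qsupp z') : z = z' := by
  funext i
  by_cases hi : i ∈ qsupp z
  · rw [hz i (mem_qsupp.1 hi), hz' i (mem_qsupp.1 (h ▸ hi))]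
  · have hz0 : z i = 0 := notMem_qsupp.1 hi
    have hz'0 : z' i = 0 := notMem_qsupp.1 (h ▸ hi)
    rw [hz0, hz'0]

theorem IsSubword.hammingDist_eq (h : IsSubword z x) : hammingDist x z = qwt x - qwt z := by
  have hdiff : ({i | x i ≠ z i} : Finset (Fin n)) = qsupp x \ qsupp z := by
    ext i
    by_cases hi : z i = 0
    · simp [hi, mem_qsupp]
    · simp [hi, mem_qsupp, (h i hi).symm]
  rw [hammingDist, hdiff, card_sdiff_of_subset h.qsupp_subset, qwt, qwt]

theorem isSubword_piecewise (S : Finset (Fin n)) (x : Fin n → Fin q) :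
    IsSubword (S.piecewise x 0) x := by
  intro i hi
  by_cases hiS : i ∈ S
  · exact piecewise_eq_of_mem _ _ _ hiS
  · exact absurd (piecewise_eq_of_notMem _ _ _ hiS) hi

theorem qsupp_piecewise (h : S ⊆ qsupp x) : qsupp (S.piecewise x 0) = S := by
  ext i
  rw [mem_qsupp]
  by_cases hiS : i ∈ S
  · simpa [hiS] using mem_qsupp.1 (h hiS)
  · simp [hiS]

theorem card_subwords (x : Fin n → Fin q) (j : ℕ) : #(subwords x j) = (qwt x).choose j := by
  rw [qwt, ← card_powersetCard]
  refine card_nbij' qsupp (fun S => S.piecewise x 0) ?_ ?_ ?_ ?_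
  · intro z hz
    obtain ⟨hzx, hzj⟩ := mem_subwords.1 hz
    exact mem_powersetCard.2 ⟨hzx.qsupp_subset, hzj⟩
  · intro S hS
    obtain ⟨hSx, hSj⟩ := mem_powersetCard.1 hS
    exact mem_subwords.2 ⟨isSubword_piecewise S x, by rw [qwt, qsupp_piecewise hSx, hSj]⟩
  · intro z hz
    have hzx := (mem_subwords.1 hz).1
    exact (isSubword_piecewise _ x).eq_of_qsupp_eq hzx (qsupp_piecewise hzx.qsupp_subset)
  · intro S hS
    exact qsupp_piecewise (mem_powersetCard.1 hS).1

theorem card_subwords_inter_le (x y : Fin n → Fin q) (j : ℕ) :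
    #(subwords x j ∩ subwords y j) ≤ (#(agreement x y)).choose j := by
  rw [← card_powersetCard]
  refine card_le_card_of_injOn qsupp ?_ ?_
  · intro z hz
    obtain ⟨hzx, hzj⟩ := mem_subwords.1 (mem_inter.1 hz).1
    have hzy := (mem_subwords.1 (mem_inter.1 hz).2).1
    refine mem_powersetCard.2 ⟨fun i hi => ?_, hzj⟩
    have hzi := mem_qsupp.1 hi
    exact mem_agreement.2 ⟨(hzx i hzi).symm.trans (hzy i hzi), hzx i hzi ▸ hzi⟩
  · intro z hz z' hz' h
    exact (mem_subwords.1 (mem_inter.1 hz).1).1.eq_of_qsupp_eq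
      (mem_subwords.1 (mem_inter.1 hz').1).1 h

end Subwords

section Shadow

variable {C : Finset (Fin n → Fin q)} {w t k : ℕ} {x x₀ y y' c : Fin n → Fin q}
  {X T T' : Finset (Fin n)}

theorem qsupp_piecewise_qsupp (x y : Fin n → Fin q) :
    qsupp ((qsupp x).piecewise x y) = qsupp x ∪ qsupp y := by
  ext i
  by_cases hi : i ∈ qsupp x
  · simpa [hi, mem_qsupp] using mem_qsupp.1 hi
  · simp only [mem_union, hi, false_or, mem_qsupp, piecewise_eq_of_notMem _ _ _ hi]

theorem eq_on_sdiff_of_disjoint_qsupp (hT : T ⊆ qsupp x) (hyT : Disjoint (qsupp y) T)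
    (hagr : #(qsupp x) - #T ≤ #(agreement x y)) : ∀ i ∈ qsupp x \ T, y i = x i := by
  have hsub : agreement x y ⊆ qsupp x \ T := by
    intro i hi
    obtain ⟨hxy, hx⟩ := mem_agreement.1 hi
    exact mem_sdiff.2 ⟨mem_qsupp.2 hx, disjoint_left.1 hyT (mem_qsupp.2 (hxy ▸ hx))⟩
  have heq := eq_of_subset_of_card_le hsub (by rwa [card_sdiff_of_subset hT])
  intro i hi
  exact (mem_agreement.1 (heq ▸ hi)).1.symm

theorem qsupp_inter_eq_sdiff (hyT : Disjoint (qsupp y) T) (hy : ∀ i ∈ qsupp x \ T, y i = x i) :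
    qsupp y ∩ qsupp x = qsupp x \ T := by
  ext i
  simp only [mem_inter, mem_sdiff]
  constructor
  · exact fun ⟨hiy, hix⟩ => ⟨hix, disjoint_left.1 hyT hiy⟩
  · intro hi
    refine ⟨mem_qsupp.2 ?_, hi.1⟩
    rw [hy i (mem_sdiff.2 hi)]
    exact mem_qsupp.1 hi.1

/-- Two codewords avoiding disjoint `t`-subsets of `X` share at most `#X - 2t` nonzero
entries inside `X`, so if they agree in `#X - t` places they agree on `t` entries outside `X`,
which exhausts the `t` entries either one has there. -/
theorem eq_of_notMem_of_disjoint (hX : #X = w) (hT : T ⊆ X) (hT' : T' ⊆ X)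
    (hTT' : Disjoint T T') (hTt : #T = t) (hT't : #T' = t) (hyT : Disjoint (qsupp y) T)
    (hy'T' : Disjoint (qsupp y') T') (hy : #(qsupp y \ X) = t) (hy' : #(qsupp y' \ X) = t)
    (hagr : w - t ≤ #(agreement y y')) : ∀ i ∉ X, y i = y' i := by
  set A := agreement y y'
  have hAX : A ∩ X ⊆ X \ (T ∪ T') := by
    intro i hi
    obtain ⟨hiA, hiX⟩ := mem_inter.1 hi
    obtain ⟨hyy', hyi⟩ := mem_agreement.1 hiA
    refine mem_sdiff.2 ⟨hiX, ?_⟩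
    rw [mem_union, not_or]
    exact ⟨disjoint_left.1 hyT (mem_qsupp.2 hyi),
      disjoint_left.1 hy'T' (mem_qsupp.2 (hyy' ▸ hyi))⟩
  have hTT'X := card_le_card (union_subset hT hT')
  rw [card_union_of_disjoint hTT', hX, hTt, hT't] at hTT'X
  have hcard : #(X \ (T ∪ T')) = w - 2 * t := by
    rw [card_sdiff_of_subset (union_subset hT hT'), card_union_of_disjoint hTT', hX, hTt, hT't]
    omega
  have hAout : t ≤ #(A \ X) := by
    have := card_inter_add_card_sdiff A X
    have := card_le_card hAX
    omega
  have hAy : A \ X = qsupp y \ X := by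
    refine eq_of_subset_of_card_le (fun i hi => ?_) (by omega)
    obtain ⟨hiA, hiX⟩ := mem_sdiff.1 hi
    exact mem_sdiff.2 ⟨mem_qsupp.2 (mem_agreement.1 hiA).2, hiX⟩
  have hAy' : A \ X = qsupp y' \ X := by
    refine eq_of_subset_of_card_le (fun i hi => ?_) (by omega)
    obtain ⟨hiA, hiX⟩ := mem_sdiff.1 hi
    obtain ⟨hyy', hyi⟩ := mem_agreement.1 hiA
    exact mem_sdiff.2 ⟨mem_qsupp.2 (hyy' ▸ hyi), hiX⟩
  intro i hiX
  by_cases hi : i ∈ A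
  · exact (mem_agreement.1 hi).1
  · have hiy : y i = 0 := notMem_qsupp.1 fun h => hi (mem_sdiff.1 (hAy ▸ mem_sdiff.2 ⟨h, hiX⟩)).1
    have hiy' : y' i = 0 :=
      notMem_qsupp.1 fun h => hi (mem_sdiff.1 (hAy' ▸ mem_sdiff.2 ⟨h, hiX⟩)).1
    rw [hiy, hiy']

theorem subwords_subset_codeShadow_of_forall_eq (hx₀ : x₀ ∈ C) (hx₀w : qwt x₀ = w)
    (hk : t + k ≤ w + 1) (hc : ∀ i ∈ qsupp x₀, c i = x₀ i)
    (hcov : ∀ T ⊆ qsupp x₀, #T = t → ∃ y ∈ C, ∀ i ∉ T, c i = y i) :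
    subwords c k ⊆ codeShadow C k := by
  intro z hz
  obtain ⟨hzc, hzk⟩ := mem_subwords.1 hz
  refine mem_codeShadow.2 ?_
  by_cases hzX : qsupp z ⊆ qsupp x₀
  · refine ⟨x₀, hx₀, fun i hi => ?_, hzk⟩
    rw [hzc i hi, hc i (hzX (mem_qsupp.2 hi))]
  · obtain ⟨i₀, hi₀z, hi₀X⟩ := not_subset.1 hzX
    have hinter : #(qsupp z ∩ qsupp x₀) < k := by
      have hsub : qsupp z ∩ qsupp x₀ ⊆ (qsupp z).erase i₀ := fun i hi =>
        mem_erase.2 ⟨fun h => hi₀X (h ▸ (mem_inter.1 hi).2), (mem_inter.1 hi).1⟩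
      have := card_le_card hsub
      rw [card_erase_of_mem hi₀z, ← qwt, hzk] at this
      have : 0 < k := hzk ▸ card_pos.2 ⟨i₀, hi₀z⟩
      omega
    obtain ⟨T, hT, hTt⟩ := exists_subset_card_eq (s := qsupp x₀ \ qsupp z) (n := t)
      (by rw [card_sdiff, ← qwt, hx₀w]; omega)
    obtain ⟨y, hyC, hy⟩ := hcov T (hT.trans sdiff_subset) hTt
    refine ⟨y, hyC, fun i hi => ?_, hzk⟩
    rw [hzc i hi, hy i fun h => (mem_sdiff.1 (hT h)).2 (mem_qsupp.2 hi)]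

/-- For each `t`-subset `T` of `supp x₀` a codeword avoiding `T` must agree with `x₀` on the rest
of `supp x₀` and have `t` more entries outside it; these entries do not depend on `T`, and
extending `x₀` by them gives `c`. -/
theorem exists_superword (hC : ∀ x ∈ C, qwt x = w) (hA : IsAvoiding t C)
    (hagr : ∀ x ∈ C, ∀ y ∈ C, w - t ≤ #(agreement x y)) (hw : 2 * t + 1 ≤ w) (hx₀ : x₀ ∈ C) :
    ∃ c, qwt c = w + t ∧ (∀ i ∈ qsupp x₀, c i = x₀ i) ∧
      ∀ T ⊆ qsupp x₀, #T = t → ∃ y ∈ C, ∀ i ∉ T, c i = y i := by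
  choose! Y hYC hYT using hA
  set X := qsupp x₀ with hXdef
  have hX : #X = w := hC x₀ hx₀
  have hYx : ∀ T ⊆ X, #T = t → ∀ i ∈ X \ T, Y T i = x₀ i := fun T hT hTt =>
    eq_on_sdiff_of_disjoint_qsupp hT (hYT T hTt) (by rw [hX, hTt]; exact hagr _ hx₀ _ (hYC T hTt))
  have hYout : ∀ T ⊆ X, #T = t → #(qsupp (Y T) \ X) = t := by
    intro T hT hTt
    have h := card_sdiff_add_card_inter (qsupp (Y T)) X
    rw [qsupp_inter_eq_sdiff (hYT T hTt) (hYx T hT hTt), card_sdiff_of_subset hT, hX, hTt,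
      ← qwt, hC _ (hYC T hTt)] at h
    omega
  have hconst : ∀ T ⊆ X, #T = t → ∀ T' ⊆ X, #T' = t →
      X.piecewise x₀ (Y T) = X.piecewise x₀ (Y T') := by
    intro T hT hTt T' hT' hT't
    refine apply_eq_of_disjoint_apply_eq (f := fun T => X.piecewise x₀ (Y T)) (by omega)
      (fun T hT T' hT' hTt hT't hTT' => ?_) hT hT' hTt hT't
    have hout := eq_of_notMem_of_disjoint hX hT hT' hTT' hTt hT't (hYT T hTt) (hYT T' hT't)
      (hYout T hT hTt) (hYout T' hT' hT't) (hagr _ (hYC T hTt) _ (hYC T' hT't))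
    funext i
    by_cases hi : i ∈ X
    · simp only [piecewise_eq_of_mem _ _ _ hi]
    · simp only [piecewise_eq_of_notMem _ _ _ hi, hout i hi]
  obtain ⟨T₀, hT₀, hT₀t⟩ := exists_subset_card_eq (s := X) (n := t) (by omega)
  refine ⟨X.piecewise x₀ (Y T₀), ?_, fun i hi => piecewise_eq_of_mem _ _ _ hi,
    fun T hT hTt => ⟨Y T, hYC T hTt, fun i hiT => ?_⟩⟩
  · rw [qwt, hXdef, qsupp_piecewise_qsupp, union_comm, ← card_sdiff_add_card, ← hXdef,
      hYout T₀ hT₀ hT₀t, hX, add_comm]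
  · rw [hconst T₀ hT₀ hT₀t T hT hTt]
    by_cases hiX : i ∈ X
    · rw [piecewise_eq_of_mem _ _ _ hiX, hYx T hT hTt i (mem_sdiff.2 ⟨hiX, hiT⟩)]
    · rw [piecewise_eq_of_notMem _ _ _ hiX]

/-- If fewer than `w + t` letters occurred in `C`, all but at most `t - 1` of them would be
letters of `x₀`; a `t`-set covering the positions of the others and one position of `x₀` is
avoided only by codewords made of the remaining `w - 1` letters of `x₀`. -/
theorem add_le_card_codeShadow_one (hC : ∀ x ∈ C, qwt x = w) (hA : IsAvoiding t C)
    (hw : 0 < w) (hn : t ≤ n) (hx₀ : x₀ ∈ C) : w + t ≤ #(codeShadow C 1) := by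
  by_contra! hlt
  set R := codeShadow C 1 \ subwords x₀ 1
  have hx₀sub : subwords x₀ 1 ⊆ codeShadow C 1 := subwords_subset_codeShadow hx₀
  have hx₀card : #(subwords x₀ 1) = w := by rw [card_subwords, hC x₀ hx₀, Nat.choose_one_right]
  have hR : #R + w = #(codeShadow C 1) := by
    have := card_le_card hx₀sub
    rw [card_sdiff_of_subset hx₀sub, hx₀card]
    omega
  have hpos : #(R.biUnion qsupp) + 1 ≤ t := by
    have := card_biUnion_le_card_mul R qsupp 1 fun z hz =>
      (mem_codeShadow.1 (mem_sdiff.1 hz).1).choose_spec.2.2.le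
    omega
  obtain ⟨p, hp⟩ : (qsupp x₀).Nonempty := card_pos.1 (by rw [← qwt, hC x₀ hx₀]; exact hw)
  obtain ⟨T, hT, hTt⟩ := exists_superset_card_eq (s := insert p (R.biUnion qsupp)) (n := t)
    ((card_insert_le _ _).trans hpos) (by simpa using hn)
  obtain ⟨y, hyC, hyT⟩ := hA T hTt
  have hy : qsupp y ⊆ (qsupp x₀).erase p := by
    intro i hi
    have hiT : i ∉ T := disjoint_left.1 hyT hi
    have hℓ : qsupp (({i} : Finset (Fin n)).piecewise y 0) = {i} :=
      qsupp_piecewise (singleton_subset_iff.2 hi)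
    have hℓy : ({i} : Finset (Fin n)).piecewise y 0 ∈ codeShadow C 1 :=
      subwords_subset_codeShadow hyC
        (mem_subwords.2 ⟨isSubword_piecewise _ y, by rw [qwt, hℓ, card_singleton]⟩)
    have hℓx : ({i} : Finset (Fin n)).piecewise y 0 ∈ subwords x₀ 1 := by
      by_contra h
      refine hiT (hT (mem_insert_of_mem (mem_biUnion.2 ⟨_, mem_sdiff.2 ⟨hℓy, h⟩, ?_⟩)))
      rw [hℓ]
      exact mem_singleton_self i
    refine mem_erase.2 ⟨fun h => hiT (hT (h ▸ mem_insert_self _ _)), ?_⟩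
    exact (mem_subwords.1 hℓx).1.qsupp_subset (by rw [hℓ]; exact mem_singleton_self i)
  have := card_le_card hy
  rw [card_erase_of_mem hp, ← qwt, ← qwt, hC y hyC, hC x₀ hx₀] at this
  omega

theorem choose_le_card_codeShadow (hC : ∀ x ∈ C, qwt x = w) (hA : IsAvoiding t C)
    (hn : t ≤ n) (hx₀ : x₀ ∈ C) (hk : 0 < k) (hkw : k ≤ w)
    (hcond : (w - t - 1).choose k + (w + t).choose k ≤ 2 * w.choose k) :
    (w + t).choose k ≤ #(codeShadow C k) := by
  have htk := Nat.mul_le_of_choose_add_le_two_mul (t := t) hk hkw (by omega)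
  obtain rfl | hk2 := eq_or_lt_of_le (Nat.one_le_iff_ne_zero.2 hk.ne')
  · rw [Nat.choose_one_right]
    exact add_le_card_codeShadow_one hC hA (by omega) hn hx₀
  by_cases hpair : ∃ x ∈ C, ∃ y ∈ C, #(agreement x y) < w - t
  · obtain ⟨x, hx, y, hy, hxy⟩ := hpair
    have hunion := card_union_add_card_inter (subwords x k) (subwords y k)
    have hinter := card_subwords_inter_le x y k
    have hmono := Nat.choose_le_choose k (show #(agreement x y) ≤ w - t - 1 by omega)
    have hsub := card_le_card
      (union_subset (subwords_subset_codeShadow (j := k) hx) (subwords_subset_codeShadow hy))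
    rw [card_subwords, card_subwords, hC x hx, hC y hy] at hunion
    omega
  · push Not at hpair
    have h2t : t * 2 ≤ t * k := Nat.mul_le_mul_left t hk2
    have htt : t ≤ t * k := Nat.le_mul_of_pos_right t hk
    obtain ⟨c, hcw, hc, hcov⟩ := exists_superword hC hA hpair (by omega) hx₀
    calc (w + t).choose k = #(subwords c k) := by rw [card_subwords, hcw]
      _ ≤ #(codeShadow C k) := card_le_card
        (subwords_subset_codeShadow_of_forall_eq hx₀ (hC x₀ hx₀) (by omega) hc hcov)

end Shadow

/-- A codeword of weight `u < w` has `C(u, j) = C(j + e, j)` subwords of weight `j = u - e`, all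
within distance `e` of it: this weight makes them together worth `C(w + t, w - e)`. -/
def levelWeight (t w e j : ℕ) : ℚ :=
  if j = w - e then 1 else ((w + t).choose (w - e) : ℚ) / (j + e).choose j

theorem levelWeight_nonneg (t w e j : ℕ) : 0 ≤ levelWeight t w e j := by
  unfold levelWeight
  split_ifs <;> positivity

variable {C : Finset (Fin n → Fin q)} {w t e : ℕ} {x : Fin n → Fin q}

theorem sum_levelWeight_subwords (hxw : qwt x < w) (hew : e < w) :
    ∑ z ∈ subwords x (qwt x - e), levelWeight t w e (qwt z) = (w + t).choose (w - e) := by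
  have hchoose : (qwt x - e + e).choose (qwt x - e) = (qwt x).choose (qwt x - e) := by
    rcases le_total e (qwt x) with h | h
    · rw [Nat.sub_add_cancel h]
    · rw [Nat.sub_eq_zero_of_le h, Nat.choose_zero_right, Nat.choose_zero_right]
  have hpos : (0 : ℚ) < (qwt x).choose (qwt x - e) := by
    exact_mod_cast Nat.choose_pos (Nat.sub_le _ _)
  rw [sum_congr rfl fun z hz => by rw [(mem_subwords.1 hz).2], sum_const, card_subwords,
    nsmul_eq_mul, levelWeight, if_neg (by omega), hchoose]
  field_simp

theorem exists_cover (hew : e < w)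
    (hcond : (w - t - 1).choose (w - e) + (w + t).choose (w - e) ≤ 2 * w.choose (w - e))
    (hn : t ≤ n) (hne : C.Nonempty) (hwt : ∀ x ∈ C, qwt x ≤ w) (hA : IsAvoiding t C) :
    ∃ E : Finset (Fin n → Fin q), (∀ z ∈ E, qwt z ≤ w - e ∧ ∃ x ∈ C, hammingDist x z ≤ e) ∧
      ((w + t).choose (w - e) : ℚ) ≤ ∑ z ∈ E, levelWeight t w e (qwt z) := by
  by_cases hlight : ∃ x ∈ C, qwt x < w
  · obtain ⟨x, hx, hxw⟩ := hlight
    refine ⟨subwords x (qwt x - e), fun z hz => ?_, (sum_levelWeight_subwords hxw hew).ge⟩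
    obtain ⟨hzx, hzj⟩ := mem_subwords.1 hz
    exact ⟨by omega, x, hx, by rw [hzx.hammingDist_eq]; omega⟩
  · push Not at hlight
    have hC : ∀ x ∈ C, qwt x = w := fun x hx => (hwt x hx).antisymm (hlight x hx)
    obtain ⟨x₀, hx₀⟩ := hne
    refine ⟨codeShadow C (w - e), fun z hz => ?_, ?_⟩
    · obtain ⟨x, hx, hzx, hzk⟩ := mem_codeShadow.1 hz
      exact ⟨hzk.le, x, hx, by rw [hzx.hammingDist_eq, hC x hx]; omega⟩
    · rw [sum_congr rfl fun z hz => by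
          rw [levelWeight, if_pos (mem_codeShadow.1 hz).choose_spec.2.2], sum_const, nsmul_one]
      exact_mod_cast choose_le_card_codeShadow hC hA hn hx₀ (by omega) (by omega) hcond

theorem sum_levelWeight_le (t w e : ℕ) :
    ∑ z ∈ ({z | qwt z ≤ w - e} : Finset (Fin n → Fin q)), levelWeight t w e (qwt z) ≤
      ((q : ℚ) - 1) ^ (w - e) * (n.choose (w - e)) + ((w + t).choose (w - e)) *
        ∑ k ∈ Finset.range (w - e), ((q : ℚ) - 1) ^ k * (n.choose k) / ((k + e).choose k) := by
  set S : Finset (Fin n → Fin q) := {z | qwt z ≤ w - e}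
  have hq : ((q - 1 : ℕ) : ℚ) = (q : ℚ) - 1 := by rw [Nat.cast_sub NeZero.one_le, Nat.cast_one]
  calc ∑ z ∈ S, levelWeight t w e (qwt z)
      = ∑ j ∈ range (w - e + 1), ∑ z ∈ S with qwt z = j, levelWeight t w e (qwt z) :=
        (sum_fiberwise_of_maps_to (fun z hz => mem_range.2 (by simp [S] at hz; omega)) _).symm
    _ = ∑ j ∈ range (w - e + 1), (#{z ∈ S | qwt z = j} : ℚ) * levelWeight t w e j := by
        refine sum_congr rfl fun j _ => ?_
        rw [sum_congr rfl fun z hz => by rw [(mem_filter.1 hz).2], sum_const, nsmul_eq_mul]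
    _ ≤ ∑ j ∈ range (w - e + 1), ((n.choose j * (q - 1) ^ j : ℕ) : ℚ) * levelWeight t w e j := by
        refine sum_le_sum fun j _ => mul_le_mul_of_nonneg_right ?_ (levelWeight_nonneg t w e j)
        exact_mod_cast (card_le_card (filter_subset_filter _ (filter_subset _ _))).trans
          (card_filter_qwt_eq_le j)
    _ = _ := by
        rw [sum_range_succ, add_comm, mul_sum]
        congr 1
        · simp [levelWeight, hq, mul_comm]
        · refine sum_congr rfl fun j hj => ?_
          rw [levelWeight, if_neg (mem_range.1 hj).ne]
          push_cast [hq]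
          ring

end LPECC

open LPECC in
theorem qary_lpecc_upper_bound_general (q n t w e b : ℕ) (hq : 2 ≤ q)
    (hew : e + 1 ≤ w)
    (hcond : (w - t - 1).choose (w - e) + (w + t).choose (w - e) ≤
      2 * w.choose (w - e))
    (hn : t ≤ n)
    (P : Fin b → Finset (Fin n → Fin q)) (hP : IsQaryLPECC q n t w e P) :
    (b : ℚ) ≤ (((q : ℚ) - 1) ^ (w - e) * (n.choose (w - e)) +
        ((w + t).choose (w - e)) *
          ∑ k ∈ Finset.range (w - e),
            ((q : ℚ) - 1) ^ k * (n.choose k) / ((k + e).choose k)) /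
      ((w + t).choose (w - e)) := by
  have : NeZero q := ⟨by omega⟩
  obtain ⟨hne, -, hA, hwt, hC⟩ := hP
  choose E hE hEw using fun i => exists_cover hew hcond hn (hne i) (hwt i) fun T hT => hA T hT i
  have hdisj : ((univ : Finset (Fin b)) : Set (Fin b)).PairwiseDisjoint E :=
    fun i _ j _ hij => disjoint_of_le_hammingDist (hC i j hij) (fun z hz => (hE i z hz).2)
      fun z hz => (hE j z hz).2
  rw [le_div_iff₀ (by exact_mod_cast Nat.choose_pos (by omega))]
  calc (b : ℚ) * (w + t).choose (w - e) = ∑ _i : Fin b, ((w + t).choose (w - e) : ℚ) := by simp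
    _ ≤ ∑ i, ∑ z ∈ E i, levelWeight t w e (qwt z) := sum_le_sum fun i _ => hEw i
    _ = ∑ z ∈ univ.biUnion E, levelWeight t w e (qwt z) := (sum_biUnion hdisj).symm
    _ ≤ ∑ z ∈ ({z | qwt z ≤ w - e} : Finset (Fin n → Fin q)), levelWeight t w e (qwt z) :=
        sum_le_sum_of_subset_of_nonneg
          (biUnion_subset.2 fun i _ z hz => mem_filter.2 ⟨mem_univ z, (hE i z hz).1⟩)
          fun z _ _ => levelWeight_nonneg t w e (qwt z)
    _ ≤ _ := sum_levelWeight_le t w e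

theorem qary_lpecc_upper_bound (q n t w e b : ℕ) (hq : 2 ≤ q) (ht : 1 ≤ t)
    (he : 1 ≤ e) (hew : e + 1 ≤ w)
    (hcond : (w - t - 1).choose (w - e) + (w + t).choose (w - e) ≤
      2 * w.choose (w - e))
    (hn : t ≤ n)
    (P : Fin b → Finset (Fin n → Fin q)) (hP : IsQaryLPECC q n t w e P) :
    (b : ℚ) ≤ (((q : ℚ) - 1) ^ (w - e) * (n.choose (w - e)) +
        ((w + t).choose (w - e)) *
          ∑ k ∈ Finset.range (w - e),
            ((q : ℚ) - 1) ^ k * (n.choose k) / ((k + e).choose k)) /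
      ((w + t).choose (w - e)) :=
  qary_lpecc_upper_bound_general q n t w e b hq hew hcond hn P hP
end

section
/- Let t, w, e be positive integers with e ≤ w − 1 and 2·binom(w, w−e) ≥ binom(w−t−1, w−e) + binom(w+t, w−e). Let X be a finite set with |X| = n ≥ t, and let F be a nonempty family of w-subsets of X such that for every subset T ⊆ X with |T| = t there exists B ∈ F with B ∩ T = ∅. Then the number of (w−e)-subsets of X that are contained in at least one member of F is at least binom(w+t, w−e). -/
/-!
Write `k = w - e`. If two members `B, B'` of `F` meet in at most `w - t - 1` points, their
`k`-subsets alone number at least `2 binom(w, k) - binom(w - t - 1, k) ≥ binom(w + t, k)`.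
Otherwise any two members meet in at least `w - t` points. Then a member `D` missing a
`t`-set `T ⊆ C` contains all of `C \ T`, since `|D ∩ C| ≥ |C \ T|`; applied to a `t`-set in
`(C ∩ C') \ S` this merges two members covering `S - y` and `S - z` into one covering `S`, as long
as `|S| + 2t ≤ w + 2`. The hypothesis `2 binom(w, k) ≥ binom(w + t, k)` forces this bound
for `|S| = k ≥ 2`, so every `k`-subset of `⋃ F` is covered, and `|⋃ F| ≥ w + t` because some
member misses a `t`-subset of `⋃ F`.
-/

open Finset

namespace Nat

theorem choose_succ_add_mul_choose_le_s15 (n k m : ℕ) :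
    n.choose (k + 1) + m * n.choose k ≤ (n + m).choose (k + 1) := by
  induction m with
  | zero => simp
  | succ m ih =>
    have hmono : n.choose k ≤ (n + m).choose k := choose_le_choose _ (by omega)
    rw [← add_assoc, choose_succ_succ', add_one_mul]
    omega

theorem add_two_mul_le_of_choose_add_le_two_mul {n m k : ℕ} (hk : 2 ≤ k) (hkn : k ≤ n)
    (h : (n + m).choose k ≤ 2 * n.choose k) : k + 2 * m ≤ n + 2 := by
  obtain ⟨k, rfl⟩ : ∃ k', k = k' + 1 := ⟨k - 1, by omega⟩
  by_contra! hlt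
  have hpos : 0 < n.choose k := choose_pos (by omega)
  have hsucc := choose_succ_right_eq n k
  -- multiply by `k + 1`: then it reads `binom(n, k) (n - k) < binom(n, k) m (k + 1)`
  have hlt' : n.choose (k + 1) < m * n.choose k := by
    refine Nat.lt_of_mul_lt_mul_right (a := k + 1) ?_
    rw [hsucc, mul_comm m, mul_assoc]
    have hm : 2 * m ≤ m * (k + 1) := by nlinarith
    exact Nat.mul_lt_mul_of_pos_left (by omega) hpos
  have := choose_succ_add_mul_choose_le_s15 n k m
  omega

end Nat

namespace Finset

variable {α : Type*} [DecidableEq α]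

theorem powersetCard_inter (k : ℕ) (s t : Finset α) :
    (s ∩ t).powersetCard k = s.powersetCard k ∩ t.powersetCard k := by
  ext u
  simp only [mem_inter, mem_powersetCard, subset_inter_iff]
  tauto

theorem card_powersetCard_union_add_choose (k : ℕ) (s t : Finset α) :
    #(s.powersetCard k ∪ t.powersetCard k) + (#(s ∩ t)).choose k =
      (#s).choose k + (#t).choose k := by
  rw [← card_powersetCard, powersetCard_inter, card_union_add_card_inter, card_powersetCard,
    card_powersetCard]

theorem sdiff_subset_of_disjoint_of_card_le {D E T : Finset α} (hTE : T ⊆ E)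
    (hDT : Disjoint D T) (h : #E ≤ #(D ∩ E) + #T) : E \ T ⊆ D := by
  have hsub : D ∩ E ⊆ E \ T := fun x hx =>
    mem_sdiff.2 ⟨(mem_inter.1 hx).2, disjoint_left.1 hDT (mem_inter.1 hx).1⟩
  have hcard : #(E \ T) ≤ #(D ∩ E) := by rw [card_sdiff_of_subset hTE]; omega
  rw [← eq_of_subset_of_card_le hsub hcard]
  exact inter_subset_left

theorem powersetCard_subset_filter_exists_subset {X S : Finset α} {F : Finset (Finset α)}
    {k : ℕ} (hSX : S ⊆ X) (hS : ∀ s ⊆ S, #s = k → ∃ B ∈ F, s ⊆ B) :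
    S.powersetCard k ⊆ (X.powersetCard k).filter (fun s => ∃ B ∈ F, s ⊆ B) := by
  intro s hs
  rw [mem_powersetCard] at hs
  exact mem_filter.2 ⟨mem_powersetCard.2 ⟨hs.1.trans hSX, hs.2⟩, hS s hs.1 hs.2⟩

end Finset

section SetFamily

variable {α : Type*} [DecidableEq α] {F : Finset (Finset α)} {w t : ℕ}

theorem add_le_card_sup_id {X : Finset α} (hw : 1 ≤ w) (htX : t ≤ #X)
    (hsub : ∀ B ∈ F, B ⊆ X) (hcard : ∀ B ∈ F, #B = w)
    (hmiss : ∀ T ⊆ X, #T = t → ∃ B ∈ F, Disjoint B T) :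
    w + t ≤ #(F.sup id) := by
  have hUX : F.sup id ⊆ X := Finset.sup_le hsub
  rcases le_total t #(F.sup id) with htU | hUt
  · obtain ⟨T, hTU, rfl⟩ := exists_subset_card_eq htU
    obtain ⟨B, hB, hBT⟩ := hmiss T (hTU.trans hUX) rfl
    calc w + #T = #(B ∪ T) := by rw [card_union_of_disjoint hBT, hcard B hB]
      _ ≤ #(F.sup id) := card_le_card (union_subset (le_sup (f := id) hB) hTU)
  · obtain ⟨T, hUT, hTX, hT⟩ := exists_subsuperset_card_eq hUX hUt htX
    obtain ⟨B, hB, hBT⟩ := hmiss T hTX hT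
    have hB0 : B = ∅ := disjoint_self.1 (hBT.mono_right ((le_sup (f := id) hB).trans hUT))
    have := hcard B hB
    rw [hB0, card_empty] at this
    omega

theorem exists_superset_of_erase_subsets (hcard : ∀ B ∈ F, #B = w)
    (hnear : ∀ B ∈ F, ∀ B' ∈ F, w ≤ #(B ∩ B') + t)
    (hmiss : ∀ T ⊆ F.sup id, #T = t → ∃ B ∈ F, Disjoint B T)
    {S C C' : Finset α} {y z : α} (hC : C ∈ F) (hC' : C' ∈ F) (hy : y ∈ S) (hz : z ∈ S)
    (hyz : y ≠ z) (hSC : S.erase y ⊆ C) (hSC' : S.erase z ⊆ C') (hS : #S + 2 * t ≤ w + 2) :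
    ∃ D ∈ F, S ⊆ D := by
  by_cases hyC : y ∈ C
  · exact ⟨C, hC, insert_erase hy ▸ insert_subset hyC hSC⟩
  by_cases hzC' : z ∈ C'
  · exact ⟨C', hC', insert_erase hz ▸ insert_subset hzC' hSC'⟩
  have hCS : C ∩ C' ∩ S ⊆ (S.erase y).erase z := fun x hx => by
    simp only [mem_inter, mem_erase] at hx ⊢
    exact ⟨fun hxz => hzC' (hxz ▸ hx.1.2), fun hxy => hyC (hxy ▸ hx.1.1), hx.2⟩
  have htS : t ≤ #((C ∩ C') \ S) := by
    have hCS_card := card_le_card hCS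
    rw [card_erase_of_mem (mem_erase.2 ⟨hyz.symm, hz⟩), card_erase_of_mem hy] at hCS_card
    have := card_sdiff_add_card_inter (C ∩ C') S
    have := one_lt_card.2 ⟨y, hy, z, hz, hyz⟩
    have := hnear C hC C' hC'
    omega
  obtain ⟨T, hTS, rfl⟩ := exists_subset_card_eq htS
  have hTCC' : T ⊆ C ∩ C' := hTS.trans sdiff_subset
  obtain ⟨D, hD, hDT⟩ :=
    hmiss T (hTCC'.trans (inter_subset_left.trans (le_sup (f := id) hC))) rfl
  have hsdiff {E} (hE : E ∈ F) (hTE : T ⊆ E) : E \ T ⊆ D :=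
    sdiff_subset_of_disjoint_of_card_le hTE hDT (hcard E hE ▸ hnear D hD E hE)
  refine ⟨D, hD, fun x hx => ?_⟩
  have hxT : x ∉ T := fun h => (mem_sdiff.1 (hTS h)).2 hx
  rcases eq_or_ne x y with rfl | hxy
  · exact hsdiff hC' (hTCC'.trans inter_subset_right)
      (mem_sdiff.2 ⟨hSC' (mem_erase.2 ⟨hyz, hx⟩), hxT⟩)
  · exact hsdiff hC (hTCC'.trans inter_subset_left)
      (mem_sdiff.2 ⟨hSC (mem_erase.2 ⟨hxy, hx⟩), hxT⟩)

theorem exists_superset_mem_of_card_add_two_mul_le (hF : F.Nonempty)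
    (hcard : ∀ B ∈ F, #B = w) (hnear : ∀ B ∈ F, ∀ B' ∈ F, w ≤ #(B ∩ B') + t)
    (hmiss : ∀ T ⊆ F.sup id, #T = t → ∃ B ∈ F, Disjoint B T) :
    ∀ S ⊆ F.sup id, (2 ≤ #S → #S + 2 * t ≤ w + 2) → ∃ B ∈ F, S ⊆ B := by
  intro S
  induction S using Finset.strongInduction with
  | H S ih =>
  intro hSU hS
  rcases lt_or_ge 1 #S with hlarge | hsmall
  · obtain ⟨y, hy, z, hz, hyz⟩ := one_lt_card.1 hlarge
    have herase {x} (hx : x ∈ S) : ∃ B ∈ F, S.erase x ⊆ B :=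
      ih _ (erase_ssubset hx) ((erase_subset _ _).trans hSU)
        fun _ => by rw [card_erase_of_mem hx]; omega
    obtain ⟨C, hC, hSC⟩ := herase hy
    obtain ⟨C', hC', hSC'⟩ := herase hz
    exact exists_superset_of_erase_subsets hcard hnear hmiss hC hC' hy hz hyz hSC hSC'
      (hS hlarge)
  · rcases S.eq_empty_or_nonempty with rfl | ⟨x, hx⟩
    · obtain ⟨B, hB⟩ := hF
      exact ⟨B, hB, empty_subset _⟩
    · obtain ⟨B, hB, hxB⟩ := mem_sup.1 (hSU hx)
      exact ⟨B, hB, fun y hy => card_le_one.1 hsmall y hy x hx ▸ hxB⟩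

end SetFamily

theorem covered_subsets_lower_bound_general {α : Type*} [DecidableEq α]
    (t w e n : ℕ) (hw : 1 ≤ w)
    (hcond : (w - t - 1).choose (w - e) + (w + t).choose (w - e) ≤
      2 * w.choose (w - e))
    (X : Finset α) (hX : X.card = n) (hn : t ≤ n)
    (F : Finset (Finset α)) (hF : F.Nonempty)
    (hsub : ∀ B ∈ F, B ⊆ X) (hcard : ∀ B ∈ F, B.card = w)
    (hA : ∀ T ⊆ X, T.card = t → ∃ B ∈ F, Disjoint B T) :
    (w + t).choose (w - e) ≤
      ((X.powersetCard (w - e)).filter (fun s => ∃ B ∈ F, s ⊆ B)).card := by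
  by_cases hnear : ∀ B ∈ F, ∀ B' ∈ F, w ≤ #(B ∩ B') + t
  · have hUX : F.sup id ⊆ X := Finset.sup_le hsub
    have hsize : 2 ≤ w - e → w - e + 2 * t ≤ w + 2 := fun hk =>
      Nat.add_two_mul_le_of_choose_add_le_two_mul hk (Nat.sub_le w e) (by omega)
    calc (w + t).choose (w - e) ≤ (#(F.sup id)).choose (w - e) :=
          Nat.choose_le_choose _ (add_le_card_sup_id hw (hX ▸ hn) hsub hcard hA)
      _ = #((F.sup id).powersetCard (w - e)) := (card_powersetCard _ _).symm
      _ ≤ _ := card_le_card <| powersetCard_subset_filter_exists_subset hUX fun s hs hsk =>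
          exists_superset_mem_of_card_add_two_mul_le hF hcard hnear
            (fun T hT => hA T (hT.trans hUX)) s hs (hsk ▸ hsize)
  · push Not at hnear
    obtain ⟨B, hB, B', hB', hfar⟩ := hnear
    have hunion := card_powersetCard_union_add_choose (w - e) B B'
    have hinter : (#(B ∩ B')).choose (w - e) ≤ (w - t - 1).choose (w - e) :=
      Nat.choose_le_choose _ (by omega)
    rw [hcard B hB, hcard B' hB'] at hunion
    calc (w + t).choose (w - e) ≤ #(B.powersetCard (w - e) ∪ B'.powersetCard (w - e)) := by
          omega
      _ ≤ _ := card_le_card <| union_subset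
          (powersetCard_subset_filter_exists_subset (hsub B hB) fun s hs _ => ⟨B, hB, hs⟩)
          (powersetCard_subset_filter_exists_subset (hsub B' hB') fun s hs _ => ⟨B', hB', hs⟩)

theorem covered_subsets_lower_bound {α : Type*} [DecidableEq α]
    (t w e n : ℕ) (ht : 1 ≤ t) (hw : 1 ≤ w) (he : 1 ≤ e) (hew : e + 1 ≤ w)
    (hcond : (w - t - 1).choose (w - e) + (w + t).choose (w - e) ≤
      2 * w.choose (w - e))
    (X : Finset α) (hX : X.card = n) (hn : t ≤ n)
    (F : Finset (Finset α)) (hF : F.Nonempty)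
    (hsub : ∀ B ∈ F, B ⊆ X) (hcard : ∀ B ∈ F, B.card = w)
    (hA : ∀ T ⊆ X, T.card = t → ∃ B ∈ F, Disjoint B T) :
    (w + t).choose (w - e) ≤
      ((X.powersetCard (w - e)).filter (fun s => ∃ B ∈ F, s ⊆ B)).card :=
  covered_subsets_lower_bound_general t w e n hw hcond X hX hn F hF hsub hcard hA
end

section
/- Let q ≥ 2 and let t, w, e be positive integers. If there exists an (n, 2(e+t)+1, w+t)_q constant-weight code of size M, then there exists a q-ary (n, t, w, e)-LPECC code of size M in which every codeword has weight exactly w (i.e., a q-ary (n, t, w, e)-CPECC code of size M). In particular, C_q(n,t,w,e) ≥ A_q(n, 2(e+t)+1, w+t). -/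
open Finset

/-- An `(n,d,w)_q` constant-weight code: all codewords have weight exactly `w`
and distinct codewords have Hamming distance at least `d`. -/
def IsCWC (q n d w : ℕ) (C : Finset (Fin n → Fin q)) : Prop :=
  (∀ x ∈ C, qwt x = w) ∧
  (∀ x ∈ C, ∀ y ∈ C, x ≠ y → d ≤ hammingDist x y)

/-- `Cq q n t w e` is the maximum size of a `q`-ary `(n,t,w,e)`-LPECC code. -/
noncomputable def Cq (q n t w e : ℕ) : ℕ :=
  sSup {b : ℕ | ∃ P : Fin b → Finset (Fin n → Fin q), IsQaryLPECC q n t w e P}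

/-- `Aq q n d w` is the maximum size of an `(n,d,w)_q` constant-weight code. -/
noncomputable def Aq (q n d w : ℕ) : ℕ :=
  sSup {M : ℕ | ∃ C : Finset (Fin n → Fin q), IsCWC q n d w C ∧ C.card = M}

/-! Each codeword `c` of weight `w + t` is replaced by the codeset of all words obtained from `c`
by zeroing `t` of its nonzero coordinates. Such a codeset avoids any prescribed `t` positions with
one of its words, its words have weight `w`, and they lie within distance `t` of `c`; so the
distance `2(e + t) + 1` between codewords leaves distance `2e + 1` between codesets. -/

section Hamming

variable {ι : Type*} [Fintype ι] {β : ι → Type*} [∀ i, DecidableEq (β i)]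

lemma hammingDist_piecewise_le [DecidableEq ι] (S : Finset ι) (f g : ∀ i, β i) :
    hammingDist (S.piecewise f g) g ≤ #S :=
  card_le_card fun i hi => by
    by_contra hiS
    exact (mem_filter.mp hi).2 (piecewise_eq_of_notMem _ _ _ hiS)

lemma le_hammingDist_of_near {a r s : ℕ} {x y c c' : ∀ i, β i}
    (hcc' : a + r + s ≤ hammingDist c c') (hx : hammingDist x c ≤ r)
    (hy : hammingDist y c' ≤ s) : a ≤ hammingDist x y := by
  have hcy := hammingDist_triangle c x y
  have hyc' := hammingDist_triangle c y c'
  rw [hammingDist_comm c x] at hcy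
  omega

end Hamming

section WordShadow

variable {n q : ℕ} [NeZero q]

lemma qsupp_piecewise_zero (S : Finset (Fin n)) (c : Fin n → Fin q) :
    qsupp (S.piecewise 0 c) = qsupp c \ S := by
  ext i
  by_cases hi : i ∈ S <;> simp [qsupp, hi]

def wordShadow (t : ℕ) (c : Fin n → Fin q) : Finset (Fin n → Fin q) :=
  ((qsupp c).powersetCard t).image fun S => S.piecewise 0 c

lemma mem_wordShadow {t : ℕ} {c x : Fin n → Fin q} :
    x ∈ wordShadow t c ↔ ∃ S ⊆ qsupp c, #S = t ∧ S.piecewise 0 c = x := by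
  simp [wordShadow, and_assoc]

lemma wordShadow_nonempty {t : ℕ} {c : Fin n → Fin q} (ht : t ≤ qwt c) :
    (wordShadow t c).Nonempty :=
  (powersetCard_nonempty.mpr ht).image _

lemma qwt_of_mem_wordShadow {t : ℕ} {c x : Fin n → Fin q} (hx : x ∈ wordShadow t c) :
    qwt x = qwt c - t := by
  obtain ⟨S, hSc, rfl, rfl⟩ := mem_wordShadow.mp hx
  rw [qwt, qsupp_piecewise_zero, card_sdiff_of_subset hSc, qwt]

lemma hammingDist_le_of_mem_wordShadow {t : ℕ} {c x : Fin n → Fin q}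
    (hx : x ∈ wordShadow t c) : hammingDist x c ≤ t := by
  obtain ⟨S, -, rfl, rfl⟩ := mem_wordShadow.mp hx
  exact hammingDist_piecewise_le S 0 c

lemma exists_mem_wordShadow_disjoint {t : ℕ} {c : Fin n → Fin q} (ht : t ≤ qwt c)
    {T : Finset (Fin n)} (hT : #T ≤ t) :
    ∃ x ∈ wordShadow t c, Disjoint (qsupp x) T := by
  obtain ⟨S, hTS, hSc, rfl⟩ := exists_subsuperset_card_eq (inter_subset_left (s₂ := T))
    ((card_le_card inter_subset_right).trans hT) ht
  refine ⟨S.piecewise 0 c, mem_wordShadow.mpr ⟨S, hSc, rfl, rfl⟩, ?_⟩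
  rw [qsupp_piecewise_zero, disjoint_left]
  exact fun i hi hiT => (mem_sdiff.mp hi).2 (hTS (mem_inter.mpr ⟨(mem_sdiff.mp hi).1, hiT⟩))

theorem isQaryLPECC_wordShadow {b t w e : ℕ} {c : Fin b → Fin n → Fin q}
    (hc_wt : ∀ i, qwt (c i) = w + t)
    (hc_dist : ∀ i j, i ≠ j → 2 * (e + t) + 1 ≤ hammingDist (c i) (c j)) :
    IsQaryLPECC q n t w e (fun i => wordShadow t (c i)) ∧
      ∀ i, ∀ x ∈ wordShadow t (c i), qwt x = w := by
  have hdist (i j) (hij : i ≠ j) (x) (hx : x ∈ wordShadow t (c i)) (y)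
      (hy : y ∈ wordShadow t (c j)) : 2 * e + 1 ≤ hammingDist x y :=
    le_hammingDist_of_near (by have := hc_dist i j hij; omega)
      (hammingDist_le_of_mem_wordShadow hx) (hammingDist_le_of_mem_wordShadow hy)
  have hwt (i) (x) (hx : x ∈ wordShadow t (c i)) : qwt x = w := by
    rw [qwt_of_mem_wordShadow hx, hc_wt]; omega
  have ht (i) : t ≤ qwt (c i) := by rw [hc_wt]; omega
  refine ⟨⟨fun i => wordShadow_nonempty (ht i), ?_, ?_, fun i x hx => (hwt i x hx).le, hdist⟩,
    hwt⟩
  · exact fun i j hij => disjoint_left.mpr fun x hxi hxj => by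
      simpa using hdist i j hij x hxi x hxj
  · exact fun T hT i => exists_mem_wordShadow_disjoint (ht i) hT.le

theorem exists_isQaryLPECC_of_isCWC {t w e : ℕ} {C : Finset (Fin n → Fin q)}
    (hC : IsCWC q n (2 * (e + t) + 1) (w + t) C) :
    ∃ P : Fin #C → Finset (Fin n → Fin q),
      IsQaryLPECC q n t w e P ∧ ∀ i, ∀ x ∈ P i, qwt x = w :=
  ⟨_, isQaryLPECC_wordShadow (fun i => hC.1 _ (C.equivFin.symm i).2)
    fun i j hij => hC.2 _ (C.equivFin.symm i).2 _ (C.equivFin.symm j).2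
      fun h => hij (C.equivFin.symm.injective (Subtype.ext h))⟩

end WordShadow

lemma le_Cq {q n t w e b : ℕ} {P : Fin b → Finset (Fin n → Fin q)}
    (hP : IsQaryLPECC q n t w e P) : b ≤ Cq q n t w e := by
  refine le_csSup ⟨q ^ n, ?_⟩ ⟨P, hP⟩
  rintro b' ⟨P', hne, hdisj, -⟩
  choose x hx using hne
  have hx_inj : Function.Injective x := fun i j hij => by
    by_contra hne
    exact disjoint_left.mp (hdisj i j hne) (hx i) (hij ▸ hx j)
  simpa using Fintype.card_le_of_injective x hx_inj

theorem cpecc_from_cwc_general (q n t w e M : ℕ) (hq : 2 ≤ q)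
    (C : Finset (Fin n → Fin q)) (hC : IsCWC q n (2 * (e + t) + 1) (w + t) C)
    (hM : C.card = M) :
    (∃ P : Fin M → Finset (Fin n → Fin q),
      IsQaryLPECC q n t w e P ∧ ∀ i, ∀ x ∈ P i, qwt x = w) ∧
    Aq q n (2 * (e + t) + 1) (w + t) ≤ Cq q n t w e := by
  have : NeZero q := ⟨by omega⟩
  refine ⟨hM ▸ exists_isQaryLPECC_of_isCWC hC, csSup_le' ?_⟩
  rintro _ ⟨C', hC', rfl⟩
  obtain ⟨P, hP, -⟩ := exists_isQaryLPECC_of_isCWC hC'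
  exact le_Cq hP

theorem cpecc_from_cwc (q n t w e M : ℕ) (hq : 2 ≤ q) (ht : 1 ≤ t)
    (hw : 1 ≤ w) (he : 1 ≤ e)
    (C : Finset (Fin n → Fin q)) (hC : IsCWC q n (2 * (e + t) + 1) (w + t) C)
    (hM : C.card = M) :
    (∃ P : Fin M → Finset (Fin n → Fin q),
      IsQaryLPECC q n t w e P ∧ ∀ i, ∀ x ∈ P i, qwt x = w) ∧
    Aq q n (2 * (e + t) + 1) (w + t) ≤ Cq q n t w e :=
  cpecc_from_cwc_general q n t w e M hq C hC hM
end
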